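/- If a and b are arrangements in graph G with partition {S_1,...,S_m} and both a and b belong to the same configuration tuple γ (i.e., for every i, a/S_i and b/S_i are in the same configuration c_i of S_i), then there exists a concrete plan in G from a to b. -/

import Mathlib

open scoped Classical

/-- An arrangement of robots `R` on vertices `V`: an injective partial map `V ⇀ R`. -/
abbrev Arrangement (V R : Type) := V → Option R

/-- Injectivity of an arrangement: no robot occupies two vertices. -/
def ArrInj {V R : Type} (a : Arrangement V R) : Prop :=
  ∀ u v r, a u = some r → a v = some r → u = v

/-- A plan-step `(r, u, v)` is applicable if `r` is at `u`, `v` is unoccupied,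
and `(u,v)` is an edge. -/
def Applicable {V R : Type} (G : SimpleGraph V) (a : Arrangement V R)
    (s : R × V × V) : Prop :=
  G.Adj s.2.1 s.2.2 ∧ a s.2.1 = some s.1 ∧ a s.2.2 = none

/-- Applying a plan-step: move the robot from `u` to `v`. -/
noncomputable def applyStep {V R : Type} (a : Arrangement V R) (s : R × V × V) :
    Arrangement V R :=
  fun w => if w = s.2.2 then some s.1 else if w = s.2.1 then none else a w

/-- `IsPlan G P a b`: the sequence of plan-steps `P` is a valid concrete plan in `G`
transforming arrangement `a` into arrangement `b`. -/
def IsPlan {V R : Type} (G : SimpleGraph V) :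
    List (R × V × V) → Arrangement V R → Arrangement V R → Prop
  | [], a, b => a = b
  | s :: P, a, b => Applicable G a s ∧ IsPlan G P (applyStep a s) b

/-- Mutual reachability by plans confined to the vertex set `S` (an induced
subgraph of `G`). -/
def SimIn {V R : Type} (G : SimpleGraph V) (S : Set V) (a b : Arrangement V R) : Prop :=
  (∃ P : List (R × V × V), (∀ s ∈ P, s.2.1 ∈ S ∧ s.2.2 ∈ S) ∧ IsPlan G P a b) ∧
  (∃ Q : List (R × V × V), (∀ s ∈ Q, s.2.1 ∈ S ∧ s.2.2 ∈ S) ∧ IsPlan G Q b a)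

/-- The configuration (equivalence class) of the arrangement `a` within the
subgraph `S` of `G`. -/
def clsIn {V R : Type} (G : SimpleGraph V) (S : Set V) (a : Arrangement V R) :
    Set (Arrangement V R) :=
  {b | SimIn G S a b}

/-- The arrangement `a ⊖ r`: remove robot `r`. -/
noncomputable def removeR {V R : Type} (a : Arrangement V R) (r : R) : Arrangement V R :=
  fun w => if a w = some r then none else a w

/-- The arrangement `a ⊕ (r, v)`: add robot `r` at vertex `v`. -/
noncomputable def addR {V R : Type} (a : Arrangement V R) (r : R) (v : V) :
    Arrangement V R :=
  fun w => if w = v then some r else a w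

/-- `c ⊖ (r, u)`: the set of configurations obtained from configuration `c` by
removing robot `r` exiting via vertex `u`. -/
def ominusC {V R : Type} (G : SimpleGraph V) (S : Set V)
    (c : Set (Arrangement V R)) (r : R) (u : V) : Set (Set (Arrangement V R)) :=
  {C | ∃ a ∈ c, a u = some r ∧ C = clsIn G S (removeR a r)}

/-- `c ⊕ (r, v)`: the set of configurations obtained from configuration `c` by
adding robot `r` entering at vertex `v`. -/
def oplusC {V R : Type} (G : SimpleGraph V) (S : Set V)
    (c : Set (Arrangement V R)) (r : R) (v : V) : Set (Set (Arrangement V R)) :=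
  {C | ∃ a ∈ c, a v = none ∧ C = clsIn G S (addR a r v)}

/-- The restriction `a / S` of an arrangement to a vertex set. -/
noncomputable def restrictArr {V R : Type} (a : Arrangement V R) (S : Set V) :
    Arrangement V R :=
  fun v => if v ∈ S then a v else none


/-!
Sweep through the parts one at a time. Since the parts are disjoint, a plan confined to `S i`
that carries `a / S i` to `b / S i` still works when the robots outside `S i` are put back,
whatever they are: it then turns `a` on `S i` into `b` on `S i` and fixes everything else.
After all parts have been swept, `a` has become `b`.
-/

open Function

variable {V R : Type} {G : SimpleGraph V}

theorem IsPlan.append {P Q : List (R × V × V)} {a b c : Arrangement V R}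
    (hP : IsPlan G P a b) (hQ : IsPlan G Q b c) : IsPlan G (P ++ Q) a c := by
  induction P generalizing a with
  | nil => cases hP; exact hQ
  | cons s P ih => exact ⟨hP.1, ih hP.2⟩

theorem applyStep_piecewise {S : Set V} {s : R × V × V} (hs : s.2.1 ∈ S ∧ s.2.2 ∈ S)
    (x c : Arrangement V R) :
    applyStep (S.piecewise x c) s = S.piecewise (applyStep x s) c := by
  funext w
  by_cases hw : w ∈ S
  · simp [applyStep, Set.piecewise, hw]
  · have h₂ : w ≠ s.2.2 := fun h => hw (h ▸ hs.2)
    have h₁ : w ≠ s.2.1 := fun h => hw (h ▸ hs.1)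
    simp [applyStep, Set.piecewise, hw, h₁, h₂]

theorem IsPlan.piecewise {S : Set V} {P : List (R × V × V)} {x y : Arrangement V R}
    (hPS : ∀ s ∈ P, s.2.1 ∈ S ∧ s.2.2 ∈ S) (hP : IsPlan G P x y) (c : Arrangement V R) :
    IsPlan G P (S.piecewise x c) (S.piecewise y c) := by
  induction P generalizing x with
  | nil => cases hP; rfl
  | cons s P ih =>
    obtain ⟨⟨hadj, hfrom, hto⟩, hrest⟩ := hP
    have hs := hPS s List.mem_cons_self
    refine ⟨⟨hadj, by simp [Set.piecewise, hs.1, hfrom], by simp [Set.piecewise, hs.2, hto]⟩, ?_⟩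
    rw [applyStep_piecewise hs]
    exact ih (fun t ht => hPS t (List.mem_cons_of_mem _ ht)) hrest

theorem piecewise_restrictArr (S : Set V) (x c : Arrangement V R) :
    S.piecewise (restrictArr x S) c = S.piecewise x c := by
  funext v
  by_cases hv : v ∈ S <;> simp [Set.piecewise, restrictArr, hv]

theorem exists_isPlan_piecewise_biUnion {ι : Type*} (S : ι → Set V)
    (hdisj : Pairwise (Disjoint on S)) (a b : Arrangement V R) (T : Finset ι)
    (hreach : ∀ i ∈ T, ∃ P : List (R × V × V), (∀ s ∈ P, s.2.1 ∈ S i ∧ s.2.2 ∈ S i) ∧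
      IsPlan G P (restrictArr a (S i)) (restrictArr b (S i))) :
    ∃ P : List (R × V × V), IsPlan G P a ((⋃ i ∈ T, S i).piecewise b a) := by
  induction T using Finset.induction_on with
  | empty => exact ⟨[], by funext v; simp [Set.piecewise]⟩
  | insert j T hjT ih =>
    obtain ⟨P, hP⟩ := ih fun i hi => hreach i (Finset.mem_insert_of_mem hi)
    obtain ⟨Q, hQS, hQ⟩ := hreach j (Finset.mem_insert_self j T)
    set c := (⋃ i ∈ T, S i).piecewise b a
    have hsep : Disjoint (S j) (⋃ i ∈ T, S i) :=
      Set.disjoint_iUnion₂_right.mpr fun i hi => hdisj fun h => hjT (h ▸ hi)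
    have hstart : (S j).piecewise a c = c := by
      funext v
      by_cases hv : v ∈ S j
      · simp [c, Set.piecewise, hv, Set.disjoint_left.mp hsep hv]
      · simp [Set.piecewise, hv]
    have hend : (S j).piecewise b c = (⋃ i ∈ insert j T, S i).piecewise b a := by
      rw [Finset.set_biUnion_insert]
      funext v
      by_cases hv : v ∈ S j <;> simp [c, Set.piecewise, hv]
    have hstep := hQ.piecewise hQS c
    rw [piecewise_restrictArr, piecewise_restrictArr, hstart, hend] at hstep
    exact ⟨P ++ Q, hP.append hstep⟩

/-- If `a` and `b` are arrangements in graph `G` with partition `{S 1, ..., S m}`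
and both belong to the same configuration tuple (i.e. for every `i`, the induced
arrangements `a / S i` and `b / S i` lie in the same configuration of `S i`,
i.e. are mutually reachable by plans confined to `S i`), then there exists a
concrete plan in `G` from `a` to `b`. -/
theorem plan_of_same_configuration_tuple {V R : Type} {m : ℕ} (G : SimpleGraph V)
    (S : Fin m → Set V)
    (hdisj : ∀ i j, i ≠ j → Disjoint (S i) (S j))
    (hcover : (⋃ i, S i) = Set.univ)
    (a b : Arrangement V R)
    (hsim : ∀ i, SimIn G (S i) (restrictArr a (S i)) (restrictArr b (S i))) :
    ∃ P : List (R × V × V), IsPlan G P a b := by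
  obtain ⟨P, hP⟩ := exists_isPlan_piecewise_biUnion S hdisj a b Finset.univ
    fun i _ => (hsim i).1
  have huniv : ⋃ i ∈ Finset.univ, S i = Set.univ := by simpa using hcover
  rw [huniv, Set.piecewise_univ] at hP
  exact ⟨P, hP⟩
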